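/- For every object M of Prefrag FR, the unit r_M : M → φ(ψ(M)) of the adjunction ψ ⊣ φ has surjective components r_M(λ) : M(λ) → φ(ψ(M))(λ) for all λ ∈ Λ; consequently r_M is an epimorphism in Mod FF_Λ R and the sequence 0 → ker(r_M) → M → φ(ψ(M)) → 0 is a short exact sequence in Mod FF_Λ R all of whose terms lie in Prefrag FR. -/

import Mathlib

set_option linter.unusedSectionVars false
set_option maxHeartbeats 1000000
set_option synthInstance.maxHeartbeats 1000000
set_option maxHeartbeats 2000000

noncomputable section

open CategoryTheory CategoryTheory.Limits

universe u

namespace GliderPaper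

/-- A `Γ`-filtration `FR` on a unital ring `R`: additive subgroups `F γ` with
`1 ∈ F 1`, monotone in `γ`, and multiplicative. -/
structure RingFiltration (Γ : Type u) [Group Γ] [PartialOrder Γ] (R : Type u) [Ring R] where
  F : Γ → AddSubgroup R
  one_mem : (1 : R) ∈ F 1
  mono : ∀ {α β : Γ}, α ≤ β → F α ≤ F β
  mul_mem : ∀ {α β : Γ} {a b : R}, a ∈ F α → b ∈ F β → a * b ∈ F (α * β)

variable {Γ : Type u} [Group Γ] [PartialOrder Γ]
  [CovariantClass Γ Γ (· * ·) (· ≤ ·)] [CovariantClass Γ Γ (Function.swap (· * ·)) (· ≤ ·)]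
  {R : Type u} [Ring R]

/-- Objects of the extended filtered companion category `oFF_Λ R`:
the disjoint union `Λ ⊔ {∞}`. -/
inductive OFF (FR : RingFiltration Γ R) (Λ : Set Γ) : Type u
  | of (α : Λ)
  | infty

/-- Objects of the filtered companion category `FF_Λ R`: the set `Λ`. -/
inductive FF (FR : RingFiltration Γ R) (Λ : Set Γ) : Type u
  | of (α : Λ)

variable (FR : RingFiltration Γ R) (Λ : Set Γ)

namespace OFF

/-- `le X Y` holds iff the canonical morphism `1_{X,Y}` is defined, i.e. `X ≤ Y` in `Λ`,
or `Y = ∞`. -/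
def le : OFF FR Λ → OFF FR Λ → Prop
  | of α, of β => (α : Γ) ≤ (β : Γ)
  | _, infty => True
  | infty, of _ => False

open scoped Classical in
/-- The additive subgroup of `R` of morphisms `X ⟶ Y` in `oFF_Λ R`:
`Hom(α,β) = F_{βα⁻¹}R` for `α ≤ β` in `Λ`, `Hom(X,∞) = R`, and `0` otherwise. -/
noncomputable def homGrp : OFF FR Λ → OFF FR Λ → AddSubgroup R
  | of α, of β => if (α : Γ) ≤ (β : Γ) then FR.F ((β : Γ) * (α : Γ)⁻¹) else ⊥
  | _, infty => ⊤
  | infty, of _ => ⊥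

theorem le_refl' : ∀ X : OFF FR Λ, le FR Λ X X
  | of _ => _root_.le_refl _
  | infty => trivial

theorem one_mem_homGrp : ∀ {X Y : OFF FR Λ}, le FR Λ X Y → (1 : R) ∈ homGrp FR Λ X Y
  | of α, of β, h => by
      have h' : (α : Γ) ≤ (β : Γ) := h
      have h1 : (1 : Γ) ≤ (β : Γ) * (α : Γ)⁻¹ := by
        rw [← mul_inv_cancel (α : Γ)]
        exact mul_le_mul' h' le_rfl
      simpa [homGrp, if_pos h'] using FR.mono h1 FR.one_mem
  | of _, infty, _ => trivial
  | infty, infty, _ => trivial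
  | infty, of _, h => h.elim

theorem mul_mem_homGrp : ∀ {X Y Z : OFF FR Λ} {f g : R},
    f ∈ homGrp FR Λ X Y → g ∈ homGrp FR Λ Y Z → g * f ∈ homGrp FR Λ X Z := by
  intro X Y Z f g hf hg
  cases X <;> cases Y <;> cases Z <;> simp only [homGrp] at hf hg ⊢ <;> try trivial
  case of.of.of a b c =>
    by_cases hab : (a : Γ) ≤ (b : Γ)
    · by_cases hbc : (b : Γ) ≤ (c : Γ)
      · rw [if_pos hab] at hf
        rw [if_pos hbc] at hg
        rw [if_pos (le_trans hab hbc)]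
        have := FR.mul_mem hg hf
        rwa [show (c : Γ) * (b : Γ)⁻¹ * ((b : Γ) * (a : Γ)⁻¹) = (c : Γ) * (a : Γ)⁻¹ by
          group] at this
      · rw [if_neg hbc] at hg
        rw [AddSubgroup.mem_bot] at hg
        subst hg
        simp only [zero_mul]
        exact AddSubgroup.zero_mem _
    · rw [if_neg hab] at hf
      rw [AddSubgroup.mem_bot] at hf
      subst hf
      simp only [mul_zero]
      exact AddSubgroup.zero_mem _
  case of.infty.of a c =>
    rw [AddSubgroup.mem_bot] at hg
    subst hg
    simp only [zero_mul]
    exact AddSubgroup.zero_mem _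
  case infty.of.of b c =>
    rw [AddSubgroup.mem_bot] at hf
    subst hf
    simp only [mul_zero]
    exact AddSubgroup.zero_mem _
  case infty.infty.of c =>
    rw [AddSubgroup.mem_bot] at hg
    subst hg
    simp only [zero_mul]
    exact AddSubgroup.zero_mem _

instance : Category (OFF FR Λ) where
  Hom X Y := homGrp FR Λ X Y
  id X := ⟨1, one_mem_homGrp FR Λ (le_refl' FR Λ X)⟩
  comp f g := ⟨g.1 * f.1, mul_mem_homGrp FR Λ f.2 g.2⟩
  id_comp f := Subtype.ext (mul_one f.1)
  comp_id f := Subtype.ext (one_mul f.1)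
  assoc f g h := Subtype.ext (mul_assoc h.1 g.1 f.1).symm

instance : Preadditive (OFF FR Λ) where
  homGroup X Y := inferInstanceAs (AddCommGroup (homGrp FR Λ X Y))
  add_comp _ _ _ f f' g := Subtype.ext (mul_add g.1 f.1 f'.1)
  comp_add _ _ _ f g g' := Subtype.ext (add_mul g.1 g'.1 f.1)

end OFF

namespace FF

/-- The inclusion of the objects of `FF_Λ R` into those of `oFF_Λ R`. -/
def toOFF : FF FR Λ → OFF FR Λ
  | of α => .of α

instance : Category (FF FR Λ) where
  Hom X Y := OFF.homGrp FR Λ (toOFF FR Λ X) (toOFF FR Λ Y)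
  id X := ⟨1, OFF.one_mem_homGrp FR Λ (OFF.le_refl' FR Λ _)⟩
  comp f g := ⟨g.1 * f.1, OFF.mul_mem_homGrp FR Λ f.2 g.2⟩
  id_comp f := Subtype.ext (mul_one f.1)
  comp_id f := Subtype.ext (one_mul f.1)
  assoc f g h := Subtype.ext (mul_assoc h.1 g.1 f.1).symm

instance : Preadditive (FF FR Λ) where
  homGroup X Y := inferInstanceAs (AddCommGroup (OFF.homGrp FR Λ (toOFF FR Λ X) (toOFF FR Λ Y)))
  add_comp _ _ _ f f' g := Subtype.ext (mul_add g.1 f.1 f'.1)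
  comp_add _ _ _ f g g' := Subtype.ext (add_mul g.1 g'.1 f.1)

end FF

/-- The inclusion functor `j : FF_Λ R ⥤ oFF_Λ R`. -/
def jF : FF FR Λ ⥤ OFF FR Λ where
  obj := FF.toOFF FR Λ
  map f := f
  map_id _ := rfl
  map_comp _ _ := rfl

instance : (jF FR Λ).Additive := ⟨rfl⟩

/-- `Mod C`: the category of additive functors from `C` to abelian groups. -/
abbrev Mod (C : Type u) [Category.{u} C] [Preadditive C] : Type (u + 1) :=
  C ⥤+ AddCommGrpCat.{u}

/-- The component at `X` of a morphism in `Mod C`. -/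
def mapp {C : Type u} [Category.{u} C] [Preadditive C] {M N : Mod C} (f : M ⟶ N) (X : C) :
    M.obj.obj X ⟶ N.obj.obj X :=
  (show M.obj ⟶ N.obj from f.hom).app X

/-- The canonical morphism `1_{X,Y}` in `oFF_Λ R`, given by `1_R`. -/
def unitHom (X Y : OFF FR Λ) (h : OFF.le FR Λ X Y) : X ⟶ Y :=
  ⟨1, OFF.one_mem_homGrp FR Λ h⟩

/-- The canonical morphism `1_{α,β}` in `FF_Λ R`, given by `1_R`. -/
def unitHomFF (α β : Λ) (h : (α : Γ) ≤ (β : Γ)) : (FF.of α : FF FR Λ) ⟶ FF.of β :=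
  unitHom FR Λ (.of α) (.of β) h

/-- A module `M` over `oFF_Λ R` is a preglider if all the maps `M(1_{X,Y})` are injective. -/
def IsPreglider (M : Mod (OFF FR Λ)) : Prop :=
  ∀ (X Y : OFF FR Λ) (h : OFF.le FR Λ X Y), Function.Injective (M.obj.map (unitHom FR Λ X Y h))

/-- A module `M` over `FF_Λ R` is a prefragment if all the maps `M(1_{α,β})` are injective. -/
def IsPrefragment (M : Mod (FF FR Λ)) : Prop :=
  ∀ (α β : Λ) (h : (α : Γ) ≤ (β : Γ)), Function.Injective (M.obj.map (unitHomFF FR Λ α β h))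

/-- The category of pregliders: the full subcategory of `Mod (oFF_Λ R)` of pregliders. -/
abbrev Preglid : Type (u + 1) :=
  ObjectProperty.FullSubcategory (fun M : Mod (OFF FR Λ) => IsPreglider FR Λ M)

instance : Preadditive (Preglid FR Λ) := Preadditive.inducedCategory _

/-- The category of prefragments: the full subcategory of `Mod (FF_Λ R)` of prefragments. -/
abbrev Prefrag : Type (u + 1) :=
  ObjectProperty.FullSubcategory (fun M : Mod (FF FR Λ) => IsPrefragment FR Λ M)

instance : Preadditive (Prefrag FR Λ) := Preadditive.inducedCategory _

/-- The inclusion `Preglid FR Λ ⥤ Mod (oFF_Λ R)`. -/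
def iotaF : Preglid FR Λ ⥤ Mod (OFF FR Λ) := ObjectProperty.ι _

/-- The inclusion `Prefrag FR Λ ⥤ Mod (FF_Λ R)`. -/
def etaF : Prefrag FR Λ ⥤ Mod (FF FR Λ) := ObjectProperty.ι _

/-- The component at `X` of a morphism of pregliders. -/
def pgapp {M N : Preglid FR Λ} (f : M ⟶ N) (X : OFF FR Λ) :
    M.obj.obj.obj X ⟶ N.obj.obj.obj X :=
  mapp (show M.obj ⟶ N.obj from f.hom) X

/-- The component at `X` of a morphism of prefragments. -/
def pfapp {M N : Prefrag FR Λ} (f : M ⟶ N) (X : FF FR Λ) :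
    M.obj.obj.obj X ⟶ N.obj.obj.obj X :=
  mapp (show M.obj ⟶ N.obj from f.hom) X

/-- The class `Σ` of morphisms of pregliders all of whose components at objects of `Λ`
are isomorphisms. -/
def SigmaClass : MorphismProperty (Preglid FR Λ) :=
  fun _ _ f => ∀ α : Λ, IsIso (pgapp FR Λ f (.of α))

/-- The category of glider representations: the localization of `Preglid FR Λ` at `Σ`. -/
abbrev Glid : Type (u + 1) := (SigmaClass FR Λ).Localization

/-- The localization functor `Q : Preglid FR Λ ⥤ Glid FR Λ`. -/
def QF : Preglid FR Λ ⥤ Glid FR Λ := (SigmaClass FR Λ).Q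

/-- The restriction functor `j^* : Mod (oFF_Λ R) ⥤ Mod (FF_Λ R)`. -/
def jStar : Mod (OFF FR Λ) ⥤ Mod (FF FR Λ) where
  obj M := ⟨jF FR Λ ⋙ M.obj, by haveI := M.property; show (jF FR Λ ⋙ M.obj).Additive; infer_instance⟩
  map {M N} f := ⟨Functor.whiskerLeft (jF FR Λ) (show M.obj ⟶ N.obj from f.hom)⟩
  map_id _ := rfl
  map_comp _ _ := rfl

theorem isPrefragment_jStar (M : Mod (OFF FR Λ)) (hM : IsPreglider FR Λ M) :
    IsPrefragment FR Λ ((jStar FR Λ).obj M) :=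
  fun α β h => hM (.of α) (.of β) h

/-- The restriction functor `j^* : Preglid FR Λ ⥤ Prefrag FR Λ`. -/
def jRes : Preglid FR Λ ⥤ Prefrag FR Λ where
  obj M := ⟨(jStar FR Λ).obj M.obj, isPrefragment_jStar FR Λ M.obj M.property⟩
  map f := ⟨(jStar FR Λ).map f.hom⟩
  map_id M := by ext1; exact (jStar FR Λ).map_id M.obj
  map_comp f g := by ext1; exact (jStar FR Λ).map_comp f.hom g.hom

theorem sigma_isInvertedBy : (SigmaClass FR Λ).IsInvertedBy (jRes FR Λ) := by
  intro M N f hf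
  haveI : (AdditiveFunctor.forget (FF FR Λ) AddCommGrpCat.{u}).Faithful :=
    inferInstance
  haveI : ∀ X : FF FR Λ, IsIso
      (((ObjectProperty.ι (fun M : Mod (FF FR Λ) => IsPrefragment FR Λ M) ⋙
        AdditiveFunctor.forget _ _).map ((jRes FR Λ).map f)).app X) := by
    rintro ⟨α⟩
    exact hf α
  haveI : IsIso ((ObjectProperty.ι (fun M : Mod (FF FR Λ) => IsPrefragment FR Λ M) ⋙
      AdditiveFunctor.forget _ _).map ((jRes FR Λ).map f)) :=
    NatIso.isIso_of_isIso_app _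
  exact isIso_of_reflects_iso ((jRes FR Λ).map f)
    (ObjectProperty.ι (fun M : Mod (FF FR Λ) => IsPrefragment FR Λ M) ⋙
      AdditiveFunctor.forget _ _)

/-- The canonical fully faithful functor `φ : Glid FR Λ ⥤ Prefrag FR Λ`,
the unique functor with `Q ⋙ φ = j^*`. -/
def phiF : Glid FR Λ ⥤ Prefrag FR Λ :=
  Localization.Construction.lift (jRes FR Λ) (sigma_isInvertedBy FR Λ)

theorem phiF_fac : QF FR Λ ⋙ phiF FR Λ = jRes FR Λ :=
  Localization.Construction.fac _ _

/-! The unit `r : M ⟶ φ (ψ M)` lands in `j^* P` for the preglider `P` underlying `ψ M`. Let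
`W ⊆ P` be the sub-preglider given by the image of `r` on `Λ` and by all of `P(∞)` at `∞`. As `r`
factors through `φ (Q W)`, the universal property of the unit yields `t : ψ M ⟶ Q W` with
`t ≫ Q (W ↪ P) = 𝟙`. Applying `φ`, the inclusion `W ↪ P` is surjective on `Λ`, hence so is `r`. -/

theorem _root_.CategoryTheory.Adjunction.isSplitEpi_of_unit_factors {C D : Type*} [Category C]
    [Category D] {F : C ⥤ D} {G : D ⥤ C} (adj : F ⊣ G) {X : C} {W : D} (i : W ⟶ F.obj X)
    (f : X ⟶ G.obj W) (h : f ≫ G.map i = adj.unit.app X) : IsSplitEpi i :=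
  ⟨⟨(adj.homEquiv X W).symm f, (adj.homEquiv X _).injective <| by
    rw [adj.homEquiv_naturality_right, Equiv.apply_symm_apply, h, adj.homEquiv_id]⟩⟩

section Sub

variable {C : Type u} [Category.{u} C] [Preadditive C]

namespace Mod

def sub (M : Mod C) (S : ∀ X, AddSubgroup (M.obj.obj X))
    (hS : ∀ {X Y : C} (f : X ⟶ Y), S X ≤ (S Y).comap (M.obj.map f).hom) : Mod C :=
  ⟨{ obj X := AddCommGrpCat.of (S X)
     map f := AddCommGrpCat.ofHom
       (((M.obj.map f).hom.comp (S _).subtype).codRestrict (S _) fun x => hS f x.2)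
     map_id _ := by ext; simp
     map_comp _ _ := by ext; simp; rfl },
   ⟨by intros; ext; simp; rfl⟩⟩

theorem mapp_naturality {M N : Mod C} (g : N ⟶ M) {X Y : C} (f : X ⟶ Y) (x : N.obj.obj X) :
    mapp g Y (N.obj.map f x) = M.obj.map f (mapp g X x) :=
  congrArg (fun h => h x) (g.hom.naturality f)

theorem epi_of_surjective_mapp {M N : Mod C} (g : N ⟶ M)
    (hg : ∀ X, Function.Surjective (mapp g X)) : Epi g := by
  have : ∀ X, Epi (g.hom.app X) := fun X => ConcreteCategory.epi_of_surjective _ (hg X)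
  have : Epi g.hom := NatTrans.epi_of_epi_app _
  exact (ObjectProperty.ι _).epi_of_epi_map this

variable {M : Mod C} {S : ∀ X, AddSubgroup (M.obj.obj X)}
  {hS : ∀ {X Y : C} (f : X ⟶ Y), S X ≤ (S Y).comap (M.obj.map f).hom}

def subι : sub M S hS ⟶ M :=
  ObjectProperty.homMk { app X := AddCommGrpCat.ofHom (S X).subtype }

theorem mapp_subι_injective (X : C) : Function.Injective (mapp (subι (hS := hS)) X) :=
  Subtype.val_injective

theorem range_mapp_subι (X : C) : Set.range (mapp (subι (hS := hS)) X) = S X :=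
  Subtype.range_val

theorem injective_map_sub {X Y : C} {f : X ⟶ Y} (hf : Function.Injective (M.obj.map f)) :
    Function.Injective ((sub M S hS).obj.map f) :=
  fun _ _ h => Subtype.val_injective (hf (congrArg Subtype.val h))

def subLift {N : Mod C} (g : N ⟶ M) (hg : ∀ X x, mapp g X x ∈ S X) : N ⟶ sub M S hS :=
  ObjectProperty.homMk
    { app X := AddCommGrpCat.ofHom ((mapp g X).hom.codRestrict (S X) (hg X))
      naturality X Y f := by
        ext x
        exact Subtype.ext (mapp_naturality g f x) }

end Mod

end Sub

variable {FR Λ}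

theorem OFF.eq_zero_of_infty_hom {β : Λ} (f : (OFF.infty : OFF FR Λ) ⟶ .of β) : f = 0 :=
  Subtype.ext (AddSubgroup.mem_bot.mp f.2)

namespace Prefrag

theorem surjective_pfapp_of_isSplitEpi {M N : Prefrag FR Λ} (p : M ⟶ N) [IsSplitEpi p]
    (X : FF FR Λ) : Function.Surjective (pfapp FR Λ p X) :=
  fun y => ⟨pfapp FR Λ (section_ p) X y, congrArg (fun g => pfapp FR Λ g X y) (IsSplitEpi.id p)⟩

variable {M N : Prefrag FR Λ}

theorem ker_le_comap (u : M ⟶ N) {X Y : FF FR Λ} (f : X ⟶ Y) :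
    (pfapp FR Λ u X).hom.ker ≤ (pfapp FR Λ u Y).hom.ker.comap (M.obj.obj.map f).hom := by
  intro x hx
  simp only [AddSubgroup.mem_comap, AddMonoidHom.mem_ker] at hx ⊢
  rw [pfapp, Mod.mapp_naturality, ← pfapp, hx, map_zero]

def ker (u : M ⟶ N) : Prefrag FR Λ :=
  ⟨Mod.sub M.obj _ (ker_le_comap u), fun α β h => Mod.injective_map_sub (M.property α β h)⟩

def kerι (u : M ⟶ N) : ker u ⟶ M :=
  ObjectProperty.homMk (Mod.subι (hS := ker_le_comap u))

theorem kerι_injective (u : M ⟶ N) (X : FF FR Λ) : Function.Injective (pfapp FR Λ (kerι u) X) :=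
  Mod.mapp_subι_injective (hS := ker_le_comap u) X

theorem range_kerι (u : M ⟶ N) (X : FF FR Λ) :
    Set.range (pfapp FR Λ (kerι u) X) = (pfapp FR Λ u X).hom.ker :=
  Mod.range_mapp_subι (hS := ker_le_comap u) X

end Prefrag

namespace Preglid

variable {P : Preglid FR Λ} {M : Prefrag FR Λ}

def imageSubgroup (r : M ⟶ (jRes FR Λ).obj P) : ∀ X : OFF FR Λ, AddSubgroup (P.obj.obj.obj X)
  | .of α => (pfapp FR Λ r (FF.of α)).hom.range
  | .infty => ⊤

theorem imageSubgroup_le_comap (r : M ⟶ (jRes FR Λ).obj P) :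
    ∀ {X Y : OFF FR Λ} (f : X ⟶ Y),
      imageSubgroup r X ≤ (imageSubgroup r Y).comap (P.obj.obj.map f).hom
  | _, .infty, _ => fun _ _ => trivial
  | .infty, .of β, f => by
      intro x _
      rw [AddSubgroup.mem_comap, OFF.eq_zero_of_infty_hom f, Functor.map_zero]
      exact zero_mem _
  | .of α, .of β, f => by
      rintro _ ⟨x, rfl⟩
      exact ⟨M.obj.obj.map (show FF.of α ⟶ FF.of β from f) x, Mod.mapp_naturality r.hom _ x⟩

def image (r : M ⟶ (jRes FR Λ).obj P) : Preglid FR Λ :=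
  ⟨Mod.sub P.obj (imageSubgroup r) (imageSubgroup_le_comap r),
    fun X Y h => Mod.injective_map_sub (P.property X Y h)⟩

def imageι (r : M ⟶ (jRes FR Λ).obj P) : image r ⟶ P :=
  ObjectProperty.homMk (Mod.subι (hS := imageSubgroup_le_comap r))

def factorThruImage (r : M ⟶ (jRes FR Λ).obj P) : M ⟶ (jRes FR Λ).obj (image r) :=
  ObjectProperty.homMk <| Mod.subLift (M := (jStar FR Λ).obj P.obj)
    (S := fun X => imageSubgroup r ((jF FR Λ).obj X)) (hS := fun f => imageSubgroup_le_comap r f)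
    r.hom fun ⟨_⟩ x => ⟨x, rfl⟩

theorem factorThruImage_comp_imageι (r : M ⟶ (jRes FR Λ).obj P) :
    factorThruImage r ≫ (jRes FR Λ).map (imageι r) = r :=
  rfl

end Preglid

theorem surjective_pfapp_unit_app {L : Prefrag FR Λ ⥤ Glid FR Λ} (adj : L ⊣ phiF FR Λ)
    (M : Prefrag FR Λ) (α : Λ) : Function.Surjective (pfapp FR Λ (adj.unit.app M) (FF.of α)) := by
  -- Every object of `Glid` is `Q` of its underlying preglider, and `Q ⋙ φ = j^*` holds by `rfl`.
  let r : M ⟶ (jRes FR Λ).obj (L.obj M).as.obj := adj.unit.app M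
  have : IsSplitEpi ((QF FR Λ).map (Preglid.imageι r)) :=
    adj.isSplitEpi_of_unit_factors _ (Preglid.factorThruImage r)
      (Preglid.factorThruImage_comp_imageι r)
  intro y
  obtain ⟨⟨_, x, hx⟩, rfl⟩ := Prefrag.surjective_pfapp_of_isSplitEpi
    ((phiF FR Λ).map ((QF FR Λ).map (Preglid.imageι r))) (FF.of α) y
  exact ⟨x, hx⟩

section Statements

variable {Γ : Type u} [Group Γ] [PartialOrder Γ]
  [CovariantClass Γ Γ (· * ·) (· ≤ ·)] [CovariantClass Γ Γ (Function.swap (· * ·)) (· ≤ ·)]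
  {R : Type u} [Ring R]

theorem statement_13_general (FR : RingFiltration Γ R) (Λ : Set Γ)
    (κ : Mod (OFF FR Λ) ⥤ Preglid FR Λ)
    (jbang : Mod (FF FR Λ) ⥤ Mod (OFF FR Λ))
    (adjPsi : ((etaF FR Λ ⋙ jbang ⋙ κ) ⋙ QF FR Λ) ⊣ phiF FR Λ)
    (M : Prefrag FR Λ) :
    (∀ α : Λ, Function.Surjective (pfapp FR Λ (adjPsi.unit.app M) (FF.of α))) ∧
    Epi ((ObjectProperty.ι _).map (adjPsi.unit.app M)) ∧
    ∃ (K : Prefrag FR Λ) (ι : K ⟶ M),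
      (∀ X, Function.Injective (pfapp FR Λ ι X)) ∧
      (∀ X (y : M.obj.obj.obj X),
        pfapp FR Λ (adjPsi.unit.app M) X y = 0 ↔ y ∈ Set.range (pfapp FR Λ ι X)) := by
  have hsurj := surjective_pfapp_unit_app adjPsi M
  refine ⟨hsurj, Mod.epi_of_surjective_mapp _ fun ⟨α⟩ => hsurj α,
    Prefrag.ker (adjPsi.unit.app M), Prefrag.kerι _, Prefrag.kerι_injective _, fun X y => ?_⟩
  rw [Prefrag.range_kerι, SetLike.mem_coe, AddMonoidHom.mem_ker]

/-- For every object `M` of `Prefrag FR`, the unit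
`r_M : M ⟶ φ(ψ(M))` of the adjunction `ψ ⊣ φ` has surjective components at every
`λ ∈ Λ`; consequently `r_M` is an epimorphism in `Mod FF_Λ R` and
`0 → ker r_M → M → φ(ψ(M)) → 0` is a (componentwise) short exact sequence in
`Mod FF_Λ R` all of whose terms lie in `Prefrag FR`.  Here `κ ⊣ ι` and `j_! ⊣ j^*` are
arbitrary choices of adjunctions and `adjPsi : ψ ⊣ φ` with `ψ = Q∘κ∘j_!∘η` an arbitrary
witnessing adjunction. -/
theorem statement_13 (FR : RingFiltration Γ R) (Λ : Set Γ)
    (κ : Mod (OFF FR Λ) ⥤ Preglid FR Λ) (adjκ : κ ⊣ iotaF FR Λ)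
    (jbang : Mod (FF FR Λ) ⥤ Mod (OFF FR Λ)) (adjjb : jbang ⊣ jStar FR Λ)
    (adjPsi : ((etaF FR Λ ⋙ jbang ⋙ κ) ⋙ QF FR Λ) ⊣ phiF FR Λ)
    (M : Prefrag FR Λ) :
    (∀ α : Λ, Function.Surjective (pfapp FR Λ (adjPsi.unit.app M) (FF.of α))) ∧
    Epi ((ObjectProperty.ι _).map (adjPsi.unit.app M)) ∧
    ∃ (K : Prefrag FR Λ) (ι : K ⟶ M),
      (∀ X, Function.Injective (pfapp FR Λ ι X)) ∧
      (∀ X (y : M.obj.obj.obj X),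
        pfapp FR Λ (adjPsi.unit.app M) X y = 0 ↔ y ∈ Set.range (pfapp FR Λ ι X)) :=
  statement_13_general FR Λ κ jbang adjPsi M

end Statements

end GliderPaper
end
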